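/- Let X be a real Banach space, D ⊆ ℝᵐ a nonempty open convex set, and Ψ : D → X Fréchet differentiable with ‖Ψ'(p) − Ψ'(q)‖ ≤ C_L ‖p − q‖ for all p, q ∈ D. Suppose that for every p ∈ D there is a continuous linear map B(p) : X → ℝᵐ with B(p) ∘ Ψ'(p) = id on ℝᵐ and ‖B(p)‖ ≤ C_I. Let p† ∈ D and p⁰ ∈ D be such that, with ρ := ‖p† − p⁰‖, the closed ball of radius ρ around p† is contained in D and h := C_I C_L ρ / 2 < 1. Then the Gauss–Newton iterates p^{k+1} := p^k − B(p^k)(Ψ(p^k) − Ψ(p†)) are well defined, remain in the closed ball of radius ρ around p†, satisfy ‖p^{k+1} − p†‖ ≤ (C_I C_L/2)‖p^k − p†‖² and ‖p^k − p†‖ ≤ h^k ρ for all k ∈ ℕ, and hence converge quadratically to p†. -/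

import Mathlib

/-!
Since `B(p)` is a left inverse of `Ψ'(p)`, the Gauss–Newton error is
`p⁺ - p† = B(p) (Ψ(p†) - Ψ(p) - Ψ'(p)(p† - p))`, i.e. `B(p)` applied to a first-order Taylor
remainder, which a Lipschitz derivative bounds by `C_L/2 ‖p - p†‖²`. Hence
`‖p⁺ - p†‖ ≤ (C_I C_L/2) ‖p - p†‖² ≤ h ‖p - p†‖` on the ball of radius `ρ`, and by induction the
iterates stay in the ball and their errors decay like `h^k ρ`.
-/

open Set

section Taylor

variable {E F : Type*} [NormedAddCommGroup E] [NormedSpace ℝ E]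
  [NormedAddCommGroup F] [NormedSpace ℝ F]

theorem hasDerivAt_taylorRemainder_lineMap {f : E → F} {f' : E → E →L[ℝ] F} {x y : E} {t : ℝ}
    (hf : HasFDerivAt f (f' (x + t • (y - x))) (x + t • (y - x))) :
    HasDerivAt (fun t : ℝ => f (x + t • (y - x)) - f x - t • f' x (y - x))
      ((f' (x + t • (y - x)) - f' x) (y - x)) t := by
  have hline : HasDerivAt (fun t : ℝ => x + t • (y - x)) (y - x) t := by
    simpa using ((hasDerivAt_id t).smul_const (y - x)).const_add x
  have hlin : HasDerivAt (fun t : ℝ => t • f' x (y - x)) (f' x (y - x)) t := by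
    simpa using (hasDerivAt_id t).smul_const (f' x (y - x))
  rw [sub_apply]
  exact ((hf.comp_hasDerivAt t hline).sub_const (f x)).sub hlin

theorem Convex.norm_sub_sub_fderiv_le_of_lipschitz {s : Set E} (hs : Convex ℝ s)
    {f : E → F} {f' : E → E →L[ℝ] F} (hf : ∀ z ∈ s, HasFDerivAt f (f' z) z) {C : ℝ}
    {x y : E} (hx : x ∈ s) (hy : y ∈ s) (hLip : ∀ z ∈ s, ‖f' z - f' x‖ ≤ C * ‖z - x‖) :
    ‖f y - f x - f' x (y - x)‖ ≤ C / 2 * ‖y - x‖ ^ 2 := by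
  have hseg : ∀ t ∈ Icc (0 : ℝ) 1, x + t • (y - x) ∈ s := fun t ht => hs.add_smul_sub_mem hx hy ht
  have hderiv := fun t (ht : t ∈ Icc (0 : ℝ) 1) =>
    hasDerivAt_taylorRemainder_lineMap (hf _ (hseg t ht))
  have hbound : ∀ t ∈ Ico (0 : ℝ) 1,
      ‖(f' (x + t • (y - x)) - f' x) (y - x)‖ ≤ C * ‖y - x‖ ^ 2 * t := fun t ht =>
    calc ‖(f' (x + t • (y - x)) - f' x) (y - x)‖
        ≤ ‖f' (x + t • (y - x)) - f' x‖ * ‖y - x‖ := ContinuousLinearMap.le_opNorm _ _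
      _ ≤ C * ‖x + t • (y - x) - x‖ * ‖y - x‖ := by
          gcongr; exact hLip _ (hseg t (Ico_subset_Icc_self ht))
      _ = C * ‖y - x‖ ^ 2 * t := by
          rw [add_sub_cancel_left, norm_smul, Real.norm_of_nonneg ht.1]; ring
  have hB : ∀ t : ℝ, HasDerivAt (fun t => C / 2 * ‖y - x‖ ^ 2 * t ^ 2) (C * ‖y - x‖ ^ 2 * t) t :=
    fun t => ((hasDerivAt_pow 2 t).const_mul _).congr_deriv (by norm_num; ring)
  simpa using image_norm_le_of_norm_deriv_right_le_deriv_boundary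
    (fun t ht => (hderiv t ht).continuousAt.continuousWithinAt)
    (fun t ht => (hderiv t (Ico_subset_Icc_self ht)).hasDerivWithinAt)
    (by simp) hB hbound (right_mem_Icc.mpr zero_le_one)

end Taylor

theorem norm_sub_apply_sub_sub_le_of_comp_eq_id {E X : Type*}
    [NormedAddCommGroup E] [NormedSpace ℝ E] [NormedAddCommGroup X] [NormedSpace ℝ X]
    {A : E →L[ℝ] X} {B : X →L[ℝ] E} (hBA : B.comp A = .id ℝ E) {C : ℝ} (hB : ‖B‖ ≤ C)
    (p q : E) (u v : X) :
    ‖p - B (u - v) - q‖ ≤ C * ‖v - u - A (q - p)‖ := by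
  have hBA' : ∀ w, B (A w) = w := fun w => congrArg (· w) hBA
  have herr : p - B (u - v) - q = B (v - u - A (q - p)) := by
    simp only [map_sub, hBA']
    abel
  rw [herr]
  exact (B.le_opNorm _).trans (mul_le_mul_of_nonneg_right hB (norm_nonneg _))

theorem dist_le_pow_mul_of_dist_succ_le_mul_sq {α : Type*} [PseudoMetricSpace α]
    {x : ℕ → α} {a : α} {c ρ : ℝ} (hc : 0 ≤ c) (hcρ : c * ρ ≤ 1) (h0 : dist (x 0) a ≤ ρ)
    (hstep : ∀ k, dist (x k) a ≤ ρ → dist (x (k + 1)) a ≤ c * dist (x k) a ^ 2) (k : ℕ) :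
    dist (x k) a ≤ (c * ρ) ^ k * ρ := by
  have hρ : 0 ≤ ρ := dist_nonneg.trans h0
  induction k with
  | zero => simpa using h0
  | succ k ih =>
    have hk : dist (x k) a ≤ ρ :=
      ih.trans (mul_le_of_le_one_left hρ (pow_le_one₀ (by positivity) hcρ))
    calc dist (x (k + 1)) a ≤ c * dist (x k) a ^ 2 := hstep k hk
      _ = c * dist (x k) a * dist (x k) a := by ring
      _ ≤ c * ρ * ((c * ρ) ^ k * ρ) := by gcongr
      _ = (c * ρ) ^ (k + 1) * ρ := by ring

theorem stmt7_general {X : Type*} [NormedAddCommGroup X] [NormedSpace ℝ X]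
    {m : ℕ} (D : Set (EuclideanSpace ℝ (Fin m)))
    (Ψ : EuclideanSpace ℝ (Fin m) → X)
    (Ψ' : EuclideanSpace ℝ (Fin m) → (EuclideanSpace ℝ (Fin m) →L[ℝ] X))
    (hderiv : ∀ p ∈ D, HasFDerivAt Ψ (Ψ' p) p)
    (C_L C_I : ℝ) (hCL : 0 < C_L) (hCI : 0 < C_I)
    (hLip : ∀ p ∈ D, ∀ q ∈ D, ‖Ψ' p - Ψ' q‖ ≤ C_L * ‖p - q‖)
    (B : EuclideanSpace ℝ (Fin m) → (X →L[ℝ] EuclideanSpace ℝ (Fin m)))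
    (hBleft : ∀ p ∈ D, (B p).comp (Ψ' p) = ContinuousLinearMap.id ℝ (EuclideanSpace ℝ (Fin m)))
    (hBbound : ∀ p ∈ D, ‖B p‖ ≤ C_I)
    (pdag : EuclideanSpace ℝ (Fin m))
    (p0 : EuclideanSpace ℝ (Fin m))
    (ρ : ℝ) (hρ : ρ = ‖pdag - p0‖)
    (hball : Metric.closedBall pdag ρ ⊆ D)
    (h : ℝ) (hh : h = C_I * C_L * ρ / 2) (hh1 : h < 1)
    (seq : ℕ → EuclideanSpace ℝ (Fin m))
    (hseq0 : seq 0 = p0)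
    (hseqk : ∀ k, seq (k+1) = seq k - B (seq k) (Ψ (seq k) - Ψ pdag)) :
    (∀ k, seq k ∈ Metric.closedBall pdag ρ) ∧
    (∀ k, ‖seq (k+1) - pdag‖ ≤ C_I * C_L / 2 * ‖seq k - pdag‖ ^ 2) ∧
    (∀ k, ‖seq k - pdag‖ ≤ h ^ k * ρ) ∧
    Filter.Tendsto seq Filter.atTop (nhds pdag) := by
  have hρ0 : 0 ≤ ρ := hρ ▸ norm_nonneg _
  have hhρ : h = C_I * C_L / 2 * ρ := by rw [hh]; ring
  have h0 : 0 ≤ h := by rw [hh]; positivity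
  have hstep : ∀ p ∈ Metric.closedBall pdag ρ,
      ‖p - B p (Ψ p - Ψ pdag) - pdag‖ ≤ C_I * C_L / 2 * ‖p - pdag‖ ^ 2 := fun p hp =>
    calc ‖p - B p (Ψ p - Ψ pdag) - pdag‖ ≤ C_I * ‖Ψ pdag - Ψ p - Ψ' p (pdag - p)‖ :=
          norm_sub_apply_sub_sub_le_of_comp_eq_id (hBleft p (hball hp)) (hBbound p (hball hp)) ..
      _ ≤ C_I * (C_L / 2 * ‖pdag - p‖ ^ 2) := by
          gcongr
          exact (convex_closedBall pdag ρ).norm_sub_sub_fderiv_le_of_lipschitz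
            (fun z hz => hderiv z (hball hz)) hp (Metric.mem_closedBall_self hρ0)
            (fun z hz => hLip z (hball hz) p (hball hp))
      _ = C_I * C_L / 2 * ‖p - pdag‖ ^ 2 := by rw [norm_sub_rev]; ring
  have hdecay : ∀ k, ‖seq k - pdag‖ ≤ h ^ k * ρ := by
    rw [hhρ]
    simpa only [dist_eq_norm] using dist_le_pow_mul_of_dist_succ_le_mul_sq (x := seq) (a := pdag)
      (by positivity) (hhρ ▸ hh1.le) (by rw [hseq0, dist_comm, dist_eq_norm, hρ])
      (fun k hk => by rw [hseqk, dist_eq_norm]; exact hstep _ hk)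
  have hmem : ∀ k, seq k ∈ Metric.closedBall pdag ρ := fun k => by
    rw [Metric.mem_closedBall, dist_eq_norm]
    exact (hdecay k).trans (mul_le_of_le_one_left hρ0 (pow_le_one₀ h0 hh1.le))
  refine ⟨hmem, fun k => hseqk k ▸ hstep _ (hmem k), hdecay, ?_⟩
  rw [tendsto_iff_norm_sub_tendsto_zero]
  refine squeeze_zero (fun _ => norm_nonneg _) hdecay ?_
  simpa using (tendsto_pow_atTop_nhds_zero_of_lt_one h0 hh1).mul_const ρ

/-- local quadratic convergence of the Gauss–Newton iteration
`p^{k+1} = p^k − B(p^k)(Ψ(p^k) − Ψ(p†))` when each `B(p)` is a uniformly bounded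
left inverse of the Fréchet derivative `Ψ'(p)` and `Ψ'` is Lipschitz. -/
theorem stmt7 {X : Type*} [NormedAddCommGroup X] [NormedSpace ℝ X] [CompleteSpace X]
    {m : ℕ} (D : Set (EuclideanSpace ℝ (Fin m)))
    (hDne : D.Nonempty) (hDo : IsOpen D) (hDconv : Convex ℝ D)
    (Ψ : EuclideanSpace ℝ (Fin m) → X)
    (Ψ' : EuclideanSpace ℝ (Fin m) → (EuclideanSpace ℝ (Fin m) →L[ℝ] X))
    (hderiv : ∀ p ∈ D, HasFDerivAt Ψ (Ψ' p) p)
    (C_L C_I : ℝ) (hCL : 0 < C_L) (hCI : 0 < C_I)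
    (hLip : ∀ p ∈ D, ∀ q ∈ D, ‖Ψ' p - Ψ' q‖ ≤ C_L * ‖p - q‖)
    (B : EuclideanSpace ℝ (Fin m) → (X →L[ℝ] EuclideanSpace ℝ (Fin m)))
    (hBleft : ∀ p ∈ D, (B p).comp (Ψ' p) = ContinuousLinearMap.id ℝ (EuclideanSpace ℝ (Fin m)))
    (hBbound : ∀ p ∈ D, ‖B p‖ ≤ C_I)
    (pdag : EuclideanSpace ℝ (Fin m)) (hpdag : pdag ∈ D)
    (p0 : EuclideanSpace ℝ (Fin m)) (hp0 : p0 ∈ D)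
    (ρ : ℝ) (hρ : ρ = ‖pdag - p0‖)
    (hball : Metric.closedBall pdag ρ ⊆ D)
    (h : ℝ) (hh : h = C_I * C_L * ρ / 2) (hh1 : h < 1)
    (seq : ℕ → EuclideanSpace ℝ (Fin m))
    (hseq0 : seq 0 = p0)
    (hseqk : ∀ k, seq (k+1) = seq k - B (seq k) (Ψ (seq k) - Ψ pdag)) :
    (∀ k, seq k ∈ Metric.closedBall pdag ρ) ∧
    (∀ k, ‖seq (k+1) - pdag‖ ≤ C_I * C_L / 2 * ‖seq k - pdag‖ ^ 2) ∧
    (∀ k, ‖seq k - pdag‖ ≤ h ^ k * ρ) ∧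
    Filter.Tendsto seq Filter.atTop (nhds pdag) :=
  stmt7_general D Ψ Ψ' hderiv C_L C_I hCL hCI hLip B hBleft hBbound pdag p0 ρ hρ hball h hh hh1 seq
    hseq0 hseqk
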